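/- In the commutative ring S = ℤ[a, λ]/⟨a⁴, λ⁶ + 4λ⁵a + 10λ⁴a² + 20λ³a³⟩, the coefficient of λ⁵a³ in (λ + 2a)⁷·a equals 34, in (λ + 2a)⁶·a² equals 8, and in (λ + 2a)⁵·a³ equals 1. -/

import Mathlib

/-!
Everything lives in degree 8 (with `a` and `λ` of degree 1), and the degree-8 part of `S` is
spanned by `λ⁵a³`: monomials with `a⁴` vanish and `λ⁶a²`, `λ⁷a` are rewritten through the
relation for `λ⁶`. Each product is therefore an integer multiple of `λ⁵a³`, and the multiple
is found by expanding the binomial and reducing.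
-/

open MvPolynomial Finset

noncomputable section

/-- The ideal ⟨a⁴, λ⁶ + 4λ⁵a + 10λ⁴a² + 20λ³a³⟩ in ℤ[a, λ], with `X 0 = a`, `X 1 = λ`. -/
def Icon : Ideal (MvPolynomial (Fin 2) ℤ) :=
  Ideal.span {(X 0 : MvPolynomial (Fin 2) ℤ) ^ 4,
    (X 1) ^ 6 + 4 * (X 1) ^ 5 * X 0 + 10 * (X 1) ^ 4 * (X 0) ^ 2 + 20 * (X 1) ^ 3 * (X 0) ^ 3}

/-- The ring S = ℤ[a, λ]/⟨a⁴, λ⁶ + 4λ⁵a + 10λ⁴a² + 20λ³a³⟩. -/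
def Sg := MvPolynomial (Fin 2) ℤ ⧸ Icon

instance : CommRing Sg := Ideal.Quotient.commRing Icon

def ag : Sg := Ideal.Quotient.mk Icon (X 0)
def lg : Sg := Ideal.Quotient.mk Icon (X 1)

theorem exists_coeff_eq_of_eq_smul {R ι κ : Type*} [AddCommGroup R] [Fintype ι] [Fintype κ]
    [DecidableEq ι] [DecidableEq κ] (v : ι → κ → R) {y : R} (i₀ : ι) (j₀ : κ) {n : ℤ}
    (hy : y = n • v i₀ j₀) :
    ∃ c : ι → κ → ℤ, y = ∑ i, ∑ j, c i j • v i j ∧ c i₀ j₀ = n := by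
  refine ⟨fun i j => if i = i₀ ∧ j = j₀ then n else 0, ?_, by simp⟩
  rw [hy, Fintype.sum_eq_single i₀ fun i hi => by simp [hi],
    Fintype.sum_eq_single j₀ fun j hj => by simp [hj]]
  simp

section Relations

variable {R : Type*} [CommRing R] {l a : R}

theorem add_two_mul_pow_five_mul_pow_three (ha : a ^ 4 = 0) :
    (l + 2 * a) ^ 5 * a ^ 3 = l ^ 5 * a ^ 3 := by
  linear_combination
    (10 * l ^ 4 + 40 * l ^ 3 * a + 80 * l ^ 2 * a ^ 2 + 80 * l * a ^ 3 + 32 * a ^ 4) * ha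

variable (hl : l ^ 6 + 4 * l ^ 5 * a + 10 * l ^ 4 * a ^ 2 + 20 * l ^ 3 * a ^ 3 = 0)
include hl

theorem add_two_mul_pow_six_mul_sq (ha : a ^ 4 = 0) :
    (l + 2 * a) ^ 6 * a ^ 2 = 8 • (l ^ 5 * a ^ 3) := by
  linear_combination a ^ 2 * hl +
    (50 * l ^ 4 + 140 * l ^ 3 * a + 240 * l ^ 2 * a ^ 2 + 192 * l * a ^ 3 + 64 * a ^ 4) * ha

theorem add_two_mul_pow_seven_mul (ha : a ^ 4 = 0) :
    (l + 2 * a) ^ 7 * a = 34 • (l ^ 5 * a ^ 3) := by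
  linear_combination (l * a + 10 * a ^ 2) * hl +
    (160 * l ^ 4 + 360 * l ^ 3 * a + 672 * l ^ 2 * a ^ 2 + 448 * l * a ^ 3 + 128 * a ^ 4) * ha

end Relations

theorem ag_pow_four : ag ^ 4 = 0 := by
  have h : Ideal.Quotient.mk Icon (X 0 ^ 4) = 0 :=
    Ideal.Quotient.eq_zero_iff_mem.2 (Ideal.subset_span (Or.inl rfl))
  rwa [map_pow] at h

theorem lg_relation :
    lg ^ 6 + 4 * lg ^ 5 * ag + 10 * lg ^ 4 * ag ^ 2 + 20 * lg ^ 3 * ag ^ 3 = 0 := by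
  have h : Ideal.Quotient.mk Icon (X 1 ^ 6 + 4 * X 1 ^ 5 * X 0 + 10 * X 1 ^ 4 * X 0 ^ 2
      + 20 * X 1 ^ 3 * X 0 ^ 3) = 0 :=
    Ideal.Quotient.eq_zero_iff_mem.2 (Ideal.subset_span (Or.inr rfl))
  simp only [map_add, map_mul, map_pow, map_ofNat] at h
  exact h

/-- The coefficient of λ⁵a³ in (λ + 2a)⁷·a equals 34, in (λ + 2a)⁶·a² equals 8, and in
(λ + 2a)⁵·a³ equals 1. -/
theorem stmt7 :
    (∃ c : Fin 6 → Fin 4 → ℤ,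
      (lg + 2 * ag) ^ 7 * ag =
        (∑ i : Fin 6, ∑ j : Fin 4, c i j • (lg ^ (i : ℕ) * ag ^ (j : ℕ))) ∧
      c 5 3 = 34) ∧
    (∃ c : Fin 6 → Fin 4 → ℤ,
      (lg + 2 * ag) ^ 6 * ag ^ 2 =
        (∑ i : Fin 6, ∑ j : Fin 4, c i j • (lg ^ (i : ℕ) * ag ^ (j : ℕ))) ∧
      c 5 3 = 8) ∧
    (∃ c : Fin 6 → Fin 4 → ℤ,
      (lg + 2 * ag) ^ 5 * ag ^ 3 =
        (∑ i : Fin 6, ∑ j : Fin 4, c i j • (lg ^ (i : ℕ) * ag ^ (j : ℕ))) ∧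
      c 5 3 = 1) := by
  refine ⟨exists_coeff_eq_of_eq_smul _ 5 3 ?_, exists_coeff_eq_of_eq_smul _ 5 3 ?_,
    exists_coeff_eq_of_eq_smul _ 5 3 ?_⟩
  · exact_mod_cast add_two_mul_pow_seven_mul lg_relation ag_pow_four
  · exact_mod_cast add_two_mul_pow_six_mul_sq lg_relation ag_pow_four
  · simpa using add_two_mul_pow_five_mul_pow_three (l := lg) ag_pow_four

end
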